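/- Every nontrivial abelian group admits a nontrivial countable quotient, i.e., there exists a surjective homomorphism from the group onto a nontrivial countable abelian group. -/

import Mathlib

/-! ℚ/ℤ is an injective cogenerator of abelian groups: for `a ≠ 1` some character `A → ℚ/ℤ`
(Mathlib's `AddCircle (1 : ℚ)`) is nonzero at `a`. The quotient by its kernel embeds into the
countable group ℚ/ℤ, and `a` survives in it. -/

instance countable_multiplicative_addCircle_one_rat :
    Countable (Multiplicative (AddCircle (1 : ℚ))) :=
  (QuotientAddGroup.mk'_surjective _).countable

theorem MonoidHom.countable_quotient_ker {G H : Type*} [Group G] [Group H] [Countable H]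
    (f : G →* H) : Countable (G ⧸ f.ker) :=
  (QuotientGroup.kerLift_injective f).countable

theorem MonoidHom.nontrivial_quotient_ker {G H : Type*} [Group G] [MulOneClass H] (f : G →* H)
    {a : G} (ha : f a ≠ 1) : Nontrivial (G ⧸ f.ker) :=
  QuotientGroup.nontrivial_iff.mpr fun h => ha (f.mem_ker.mp (h ▸ Subgroup.mem_top a))

theorem CommGroup.exists_monoidHom_ratCircle_apply_ne_one {A : Type*} [CommGroup A] {a : A}
    (ha : a ≠ 1) : ∃ f : A →* Multiplicative (AddCircle (1 : ℚ)), f a ≠ 1 :=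
  let ⟨c, hc⟩ := CharacterModule.exists_character_apply_ne_zero_of_ne_zero (A := Additive A) ha
  ⟨c.toMultiplicativeRight, hc⟩

theorem nontrivial_abelian_has_nontrivial_countable_quotient
    {A : Type*} [CommGroup A] [Nontrivial A] :
    ∃ N : Subgroup A, Countable (A ⧸ N) ∧ Nontrivial (A ⧸ N) := by
  obtain ⟨a, ha⟩ := exists_ne (1 : A)
  obtain ⟨f, hf⟩ := CommGroup.exists_monoidHom_ratCircle_apply_ne_one ha
  exact ⟨f.ker, f.countable_quotient_ker, f.nontrivial_quotient_ker hf⟩
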